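/- The triple (M D, ⊕̄, ⊙̄) is a left idempotent (L, ⊕, *)-semimodule: ⊕̄ (binary join in M D) is commutative and associative with neutral element the constant-0 predicate; α ⊙̄ (x ⊕̄ y) = (α ⊙̄ x) ⊕̄ (α ⊙̄ y); (α ⊕ β) ⊙̄ x = (α ⊙̄ x) ⊕̄ (β ⊙̄ x); (α * β) ⊙̄ x = α ⊙̄ (β ⊙̄ x); 1 ⊙̄ x = x; 0 ⊙̄ x = constant-0 predicate. -/
import Mathlib


open Classical

variable {D D' L : Type*}

/-- `a` is way below `b`. -/
def WayBelow [Preorder D] (a b : D) : Prop :=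
  ∀ S : Set D, S.Nonempty → DirectedOn (· ≤ ·) S → ∀ s : D, IsLUB S s → b ≤ s → ∃ c ∈ S, a ≤ c

/-- Directed-complete poset. -/
def IsDCPO (D : Type*) [Preorder D] : Prop :=
  ∀ S : Set D, S.Nonempty → DirectedOn (· ≤ ·) S → ∃ s : D, IsLUB S s

/-- A domain: a continuous directed-complete poset. -/
def IsFuzzyDomain (D : Type*) [Preorder D] : Prop :=
  IsDCPO D ∧ ∀ b : D, DirectedOn (· ≤ ·) {a | WayBelow a b} ∧ IsLUB {a | WayBelow a b} b

/-- An `L`-fuzzy monotonic predicate on `D`: an antitone map sending directed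
suprema in `D` to infima in `L` (i.e. a Scott-continuous map `D → Lᵒᵖ`). -/
def IsMonPred [Preorder D] [CompleteLattice L] (m : D → L) : Prop :=
  Antitone m ∧ ∀ S : Set D, S.Nonempty → DirectedOn (· ≤ ·) S →
    ∀ s : D, IsLUB S s → m s = ⨅ c ∈ S, m c

/-- `η d₀` sends `d` to `1` if `d ≤ d₀` and to `0` otherwise. -/
noncomputable def eta [Preorder D] (L : Type*) [CompleteLattice L] (d₀ : D) : D → L :=
  fun d => if d ≤ d₀ then ⊤ else ⊥

/-- `f^u b = ⨅ { f a ∣ a ≪ b }`, the monotonic-predicate hull. -/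
noncomputable def uHull [Preorder D] [CompleteLattice L] (f : D → L) : D → L :=
  fun b => ⨅ a ∈ {a | WayBelow a b}, f a

/-- `α ⊙̄ m = (α * m)^u`. -/
noncomputable def smulMP [Preorder D] [CompleteLattice L] (mul : L → L → L)
    (α : L) (m : D → L) : D → L :=
  uHull (fun d => mul α (m d))

/-- Strongest postcondition transformer:
`sp(φ)(m)(b) = ⨅_{b' ≪ b} ⨆_{a} m a * φ a b'`. -/
noncomputable def sp [Preorder D] [Preorder D'] [CompleteLattice L]
    (mul : L → L → L) (φ : D → D' → L) (m : D → L) : D' → L :=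
  fun b => ⨅ b' ∈ {b' | WayBelow b' b}, ⨆ a : D, mul (m a) (φ a b')

/-- Scott continuity of `φ : D → M D'`: `φ` sends a directed supremum in `D`
to the supremum of the image in the poset of monotonic predicates on `D'`. -/
def ScottContTo [Preorder D] [Preorder D'] [CompleteLattice L] (φ : D → D' → L) : Prop :=
  ∀ S : Set D, S.Nonempty → DirectedOn (· ≤ ·) S → ∀ s : D, IsLUB S s →
    (∀ d ∈ S, φ d ≤ φ s) ∧ ∀ m : D' → L, IsMonPred m → (∀ d ∈ S, φ d ≤ m) → φ s ≤ m

section Aux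

variable [PartialOrder D] [CompletelyDistribLattice L]

lemma wb_mono_left {a' a b : D} (h : a' ≤ a) (hab : WayBelow a b) : WayBelow a' b := by
  intro S hne hdir s hlub hbs
  obtain ⟨c, hc, hac⟩ := hab S hne hdir s hlub hbs
  exact ⟨c, hc, h.trans hac⟩

lemma wb_mono_right {a b b' : D} (hab : WayBelow a b) (h : b ≤ b') : WayBelow a b' := by
  intro S hne hdir s hlub hbs
  exact hab S hne hdir s hlub (h.trans hbs)

lemma wb_nonempty (hD : IsFuzzyDomain D) (b : D) : {a | WayBelow a b}.Nonempty := by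
  rcases Set.eq_empty_or_nonempty {a | WayBelow a b} with hemp | hne
  · exfalso
    have hlub := (hD.2 b).2
    rw [hemp] at hlub
    have hbot : ∀ d : D, b ≤ d := fun d =>
      hlub.2 (fun x hx => absurd hx (Set.notMem_empty x))
    have : WayBelow b b := by
      intro S hne hdir s hlub' hbs
      obtain ⟨c, hc⟩ := hne
      exact ⟨c, hc, hbot c⟩
    exact (Set.eq_empty_iff_forall_notMem.mp hemp) b this
  · exact hne

lemma wb_le (hD : IsFuzzyDomain D) {a b : D} (h : WayBelow a b) : a ≤ b := by
  obtain ⟨hdir, hlub⟩ := hD.2 b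
  obtain ⟨c, hc, hac⟩ := h _ (wb_nonempty hD b) hdir b hlub le_rfl
  exact hac.trans (hlub.1 hc)

/-- Interpolation / sup absorption: if `a ≪ s` and `s` is the lub of a
nonempty directed `S`, then `a ≪ c` for some `c ∈ S`. -/
lemma wb_interp (hD : IsFuzzyDomain D) {S : Set D} {s a : D}
    (hne : S.Nonempty) (hdir : DirectedOn (· ≤ ·) S) (hlub : IsLUB S s)
    (h : WayBelow a s) : ∃ c ∈ S, WayBelow a c := by
  set S' : Set D := ⋃ c ∈ S, {a' | WayBelow a' c} with hS'
  have hmem : ∀ a' c, c ∈ S → WayBelow a' c → a' ∈ S' := by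
    intro a' c hc hwc
    exact Set.mem_biUnion hc hwc
  have hS'ne : S'.Nonempty := by
    obtain ⟨c, hc⟩ := hne
    obtain ⟨a0, ha0⟩ := wb_nonempty hD c
    exact ⟨a0, hmem a0 c hc ha0⟩
  have hS'dir : DirectedOn (· ≤ ·) S' := by
    rintro a1 ha1 a2 ha2
    obtain ⟨_, ⟨c1, rfl⟩, h1⟩ := ha1
    obtain ⟨_, ⟨hc1, rfl⟩, h1'⟩ := h1
    obtain ⟨_, ⟨c2, rfl⟩, h2⟩ := ha2
    obtain ⟨_, ⟨hc2, rfl⟩, h2'⟩ := h2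
    obtain ⟨c3, hc3, hc13, hc23⟩ := hdir c1 hc1 c2 hc2
    have h1'' : a1 ∈ {a' | WayBelow a' c3} := wb_mono_right h1' hc13
    have h2'' : a2 ∈ {a' | WayBelow a' c3} := wb_mono_right h2' hc23
    obtain ⟨a3, ha3, ha13, ha23⟩ := (hD.2 c3).1 a1 h1'' a2 h2''
    exact ⟨a3, hmem a3 c3 hc3 ha3, ha13, ha23⟩
  have hS'lub : IsLUB S' s := by
    constructor
    · rintro a' ha'
      obtain ⟨_, ⟨c, rfl⟩, h1⟩ := ha'
      obtain ⟨_, ⟨hc, rfl⟩, h1'⟩ := h1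
      exact (wb_le hD h1').trans (hlub.1 hc)
    · intro u hu
      apply hlub.2
      intro c hc
      apply (hD.2 c).2.2
      intro a' ha'
      exact hu (hmem a' c hc ha')
  obtain ⟨a', ha', haa'⟩ := h S' hS'ne hS'dir s hS'lub le_rfl
  obtain ⟨_, ⟨c, rfl⟩, h1⟩ := ha'
  obtain ⟨_, ⟨hc, rfl⟩, h1'⟩ := h1
  exact ⟨c, hc, wb_mono_left haa' h1'⟩

/-- The hull of any function is a monotonic predicate on a domain. -/
lemma uHull_monpred (hD : IsFuzzyDomain D) (f : D → L) : IsMonPred (uHull f) := by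
  have hanti : Antitone (uHull f) := by
    intro b b' hbb'
    show (⨅ a ∈ {a | WayBelow a b'}, f a) ≤ ⨅ a ∈ {a | WayBelow a b}, f a
    refine le_iInf₂ fun a ha => ?_
    have ha' : a ∈ {a | WayBelow a b'} := wb_mono_right ha hbb'
    exact iInf₂_le a ha'
  refine ⟨hanti, ?_⟩
  intro S hne hdir s hlub
  apply le_antisymm
  · exact le_iInf₂ fun c hc => hanti (hlub.1 hc)
  · show _ ≤ ⨅ a ∈ {a | WayBelow a s}, f a
    apply le_iInf₂
    intro a ha
    obtain ⟨c, hc, hac⟩ := wb_interp hD hne hdir hlub ha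
    refine (iInf₂_le c hc).trans ?_
    show (⨅ a' ∈ {a' | WayBelow a' c}, f a') ≤ f a
    have hac' : a ∈ {a' | WayBelow a' c} := hac
    exact iInf₂_le a hac'

/-- Infima over a directed set of a pointwise sup of antitone maps. -/
lemma directed_iInf_sup {S : Set D} (hne : S.Nonempty) (hdir : DirectedOn (· ≤ ·) S)
    {f g : D → L} (hf : Antitone f) (hg : Antitone g) :
    ⨅ c ∈ S, (f c ⊔ g c) = (⨅ c ∈ S, f c) ⊔ (⨅ c ∈ S, g c) := by
  apply le_antisymm
  · have key : (⨅ c ∈ S, f c) ⊔ (⨅ c ∈ S, g c)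
        = ⨅ c : S, ⨅ c' : S, (f c ⊔ g c') := by
      rw [iInf_subtype', iInf_subtype', iInf_sup_eq]
      exact iInf_congr fun c => sup_iInf_eq _ _
    rw [key]
    apply le_iInf
    intro c
    apply le_iInf
    intro c'
    obtain ⟨c'', hc'', h1, h2⟩ := hdir c c.2 c' c'.2
    exact (iInf₂_le c'' hc'').trans (sup_le_sup (hf h1) (hg h2))
  · exact le_iInf₂ fun c hc => sup_le_sup (iInf₂_le c hc) (iInf₂_le c hc)

end Aux

theorem stmt_12 [PartialOrder D] [CompletelyDistribLattice L]
    (hD : IsFuzzyDomain D) (mul : L → L → L)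
    (hassoc : ∀ a b c : L, mul (mul a b) c = mul a (mul b c))
    (hone : ∀ a : L, mul ⊤ a = a ∧ mul a ⊤ = a)
    (hsup₁ : ∀ (a : L) (S : Set L), mul a (sSup S) = ⨆ b ∈ S, mul a b)
    (hsup₂ : ∀ (a : L) (S : Set L), mul (sSup S) a = ⨆ b ∈ S, mul b a)
    (x y z : D → L) (hx : IsMonPred x) (hy : IsMonPred y) (hz : IsMonPred z)
    (α β : L) :
    IsMonPred (fun d => x d ⊔ y d) ∧
    IsMonPred (smulMP mul α x) ∧
    (fun d => x d ⊔ y d) = (fun d => y d ⊔ x d) ∧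
    (fun d => (x d ⊔ y d) ⊔ z d) = (fun d => x d ⊔ (y d ⊔ z d)) ∧
    (fun d => x d ⊔ (⊥ : L)) = x ∧
    smulMP mul α (fun d => x d ⊔ y d) =
      (fun d => smulMP mul α x d ⊔ smulMP mul α y d) ∧
    smulMP mul (α ⊔ β) x = (fun d => smulMP mul α x d ⊔ smulMP mul β x d) ∧
    smulMP mul (mul α β) x = smulMP mul α (smulMP mul β x) ∧
    smulMP mul ⊤ x = x ∧
    smulMP mul ⊥ x = (fun _ => (⊥ : L)) := by
  -- binary sup distributivity facts about `mul`
  have hsupb₁ : ∀ a p q : L, mul a (p ⊔ q) = mul a p ⊔ mul a q := by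
    intro a p q
    have h := hsup₁ a {p, q}
    simpa [sSup_pair, iSup_or, iSup_sup_eq] using h
  have hsupb₂ : ∀ a p q : L, mul (p ⊔ q) a = mul p a ⊔ mul q a := by
    intro a p q
    have h := hsup₂ a {p, q}
    simpa [sSup_pair, iSup_or, iSup_sup_eq] using h
  have hmono : ∀ a : L, Monotone (mul a) := by
    intro a p q hpq
    have : mul a q = mul a p ⊔ mul a q := by
      rw [← hsupb₁, sup_eq_right.mpr hpq]
    rw [this]; exact le_sup_left
  have hbot : ∀ a : L, mul ⊥ a = ⊥ := by
    intro a
    have h := hsup₂ a (∅ : Set L)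
    simpa using h
  have hWB : ∀ b : D, ({a | WayBelow a b}).Nonempty ∧
      DirectedOn (· ≤ ·) {a | WayBelow a b} ∧ IsLUB {a | WayBelow a b} b :=
    fun b => ⟨wb_nonempty hD b, (hD.2 b).1, (hD.2 b).2⟩
  refine ⟨?_, ?_, ?_, ?_, ?_, ?_, ?_, ?_, ?_, ?_⟩
  · -- IsMonPred (x ⊔ y)
    refine ⟨fun d d' hdd' => sup_le_sup (hx.1 hdd') (hy.1 hdd'), ?_⟩
    intro S hne hdir s hlub
    show x s ⊔ y s = ⨅ c ∈ S, (x c ⊔ y c)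
    rw [hx.2 S hne hdir s hlub, hy.2 S hne hdir s hlub,
      directed_iInf_sup hne hdir hx.1 hy.1]
  · -- IsMonPred (α ⊙ x)
    exact uHull_monpred hD _
  · funext d; exact sup_comm _ _
  · funext d; exact sup_assoc _ _ _
  · funext d; exact sup_bot_eq _
  · -- α ⊙ (x ⊔ y) = (α ⊙ x) ⊔ (α ⊙ y)
    funext b
    show (⨅ a ∈ {a | WayBelow a b}, mul α (x a ⊔ y a)) = _
    have hrw : ∀ a : D, mul α (x a ⊔ y a) = mul α (x a) ⊔ mul α (y a) :=
      fun a => hsupb₁ α (x a) (y a)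
    simp only [hrw]
    exact directed_iInf_sup (hWB b).1 (hWB b).2.1
      (fun d d' h => hmono α (hx.1 h)) (fun d d' h => hmono α (hy.1 h))
  · -- (α ⊔ β) ⊙ x = (α ⊙ x) ⊔ (β ⊙ x)
    funext b
    show (⨅ a ∈ {a | WayBelow a b}, mul (α ⊔ β) (x a)) = _
    have hrw : ∀ a : D, mul (α ⊔ β) (x a) = mul α (x a) ⊔ mul β (x a) :=
      fun a => hsupb₂ (x a) α β
    simp only [hrw]
    exact directed_iInf_sup (hWB b).1 (hWB b).2.1
      (fun d d' h => hmono α (hx.1 h)) (fun d d' h => hmono β (hx.1 h))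
  · -- (α * β) ⊙ x = α ⊙ (β ⊙ x)
    funext b
    show (⨅ a ∈ {a | WayBelow a b}, mul (mul α β) (x a))
        = ⨅ a ∈ {a | WayBelow a b}, mul α (smulMP mul β x a)
    apply le_antisymm
    · apply le_iInf₂
      intro a ha
      have hle : mul β (x a) ≤ smulMP mul β x a := by
        apply le_iInf₂
        intro a' ha'
        exact hmono β (hx.1 (wb_le hD ha'))
      calc (⨅ a ∈ {a | WayBelow a b}, mul (mul α β) (x a))
          ≤ mul (mul α β) (x a) := iInf₂_le a ha
        _ = mul α (mul β (x a)) := hassoc α β (x a)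
        _ ≤ mul α (smulMP mul β x a) := hmono α hle
    · apply le_iInf₂
      intro a ha
      obtain ⟨a'', ha'', haa''⟩ := wb_interp hD (hWB b).1 (hWB b).2.1 (hWB b).2.2 ha
      have haa : a ∈ {a' | WayBelow a' a''} := haa''
      have h1 : smulMP mul β x a'' ≤ mul β (x a) := by
        show (⨅ a' ∈ {a' | WayBelow a' a''}, mul β (x a')) ≤ mul β (x a)
        exact iInf₂_le a haa
      calc (⨅ a ∈ {a | WayBelow a b}, mul α (smulMP mul β x a))
          ≤ mul α (smulMP mul β x a'') := iInf₂_le a'' ha''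
        _ ≤ mul α (mul β (x a)) := hmono α h1
        _ = mul (mul α β) (x a) := (hassoc α β (x a)).symm
  · -- 1 ⊙ x = x
    funext b
    show (⨅ a ∈ {a | WayBelow a b}, mul ⊤ (x a)) = x b
    have hrw : ∀ a : D, mul ⊤ (x a) = x a := fun a => (hone (x a)).1
    simp only [hrw]
    exact (hx.2 _ (hWB b).1 (hWB b).2.1 b (hWB b).2.2).symm
  · -- 0 ⊙ x = 0
    funext b
    show (⨅ a ∈ {a | WayBelow a b}, mul ⊥ (x a)) = ⊥
    simp only [hbot]
    obtain ⟨a, ha⟩ := (hWB b).1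
    exact le_antisymm (iInf₂_le a ha) bot_le
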